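/- arXiv:2307.09913 — 4 statements merged into one kernel-verified Lean document; each statement's English description precedes it below -/
import Mathlib

section
/- Let D be a domino tiling system with tile set T such that no tile has more than two white sides. If D covers ℤₙ × ℤₘ for some positive n, m via a map ξ, then the linearization of ξ (the interpretation with domain ℤ_{n·m}, r-edges { (i, i+1) }, each element x + y·n labelled by the unique concept C_{ξ(x,y)}, and named elements ld = 0, rd = n−1, lu = (m−1)·n, ru = m·n − 1) is a D-snake, i.e., it satisfies conditions (SPath), (SNoLoop), (SUniqTil), (SSpecTil), (SHori), (SLen), and (SVerti). -/
/-- A 4-sided tile with left, down, right, and up colours. -/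
structure Tile (Col : Type) where
  left : Col
  down : Col
  right : Col
  up : Col

/-- Horizontal compatibility: the right colour of t equals the left colour of t'. -/
def HCompat {Col : Type} (t t' : Tile Col) : Prop := t.right = t'.left

/-- Vertical compatibility: the up colour of t equals the down colour of t'. -/
def VCompat {Col : Type} (t t' : Tile Col) : Prop := t.up = t'.down

/-- The tile has (at least) two white sides. -/
def TwoWhite {Col : Type} (white : Col) (t : Tile Col) : Prop :=
  (t.left = white ∧ t.down = white) ∨ (t.left = white ∧ t.right = white) ∨
  (t.left = white ∧ t.up = white) ∨ (t.down = white ∧ t.right = white) ∨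
  (t.down = white ∧ t.up = white) ∨ (t.right = white ∧ t.up = white)

/-- The tile has (at least) three white sides. -/
def ThreeWhite {Col : Type} (white : Col) (t : Tile Col) : Prop :=
  (t.left = white ∧ t.down = white ∧ t.right = white) ∨
  (t.left = white ∧ t.down = white ∧ t.up = white) ∨
  (t.left = white ∧ t.right = white ∧ t.up = white) ∨
  (t.down = white ∧ t.right = white ∧ t.up = white)

/-- `ReachN r n d e`: e is reachable from d by a path of exactly n r-edges. -/
def ReachN {α : Type} (r : α → α → Prop) : ℕ → α → α → Prop
  | 0, d, e => d = e
  | n + 1, d, e => ∃ c, r d c ∧ ReachN r n c e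

/-- (SPath): an r⁺-path starting at ld, passing through rd, then lu, ending at ru. -/
def SPath {α : Type} (r : α → α → Prop) (ld rd lu ru : α) : Prop :=
  Relation.TransGen r ld rd ∧ Relation.TransGen r rd lu ∧ Relation.TransGen r lu ru

/-- (SNoLoop): no named element r⁺-reaches itself. -/
def SNoLoop {α : Type} (r : α → α → Prop) (ld rd lu ru : α) : Prop :=
  ¬ Relation.TransGen r ld ld ∧ ¬ Relation.TransGen r rd rd ∧
  ¬ Relation.TransGen r lu lu ∧ ¬ Relation.TransGen r ru ru

/-- (SUniqTil): every element r*-reachable from ld carries exactly one tile of T. -/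
def SUniqTil {Col α : Type} (T : Set (Tile Col)) (r : α → α → Prop)
    (label : α → Tile Col → Prop) (ld : α) : Prop :=
  ∀ d, Relation.ReflTransGen r ld d → ∃! t, t ∈ T ∧ label d t

/-- (SSpecTil): the named elements are exactly the r*-reachable elements carrying
tiles with two white sides, and the four corners carry the appropriate border tiles. -/
def SSpecTil {Col α : Type} (T : Set (Tile Col)) (white : Col) (r : α → α → Prop)
    (label : α → Tile Col → Prop) (ld rd lu ru : α) : Prop :=
  (∀ d, Relation.ReflTransGen r ld d →
    ((∃ t, t ∈ T ∧ label d t ∧ TwoWhite white t) ↔ (d = ld ∨ d = rd ∨ d = lu ∨ d = ru))) ∧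
  (∃ t ∈ T, label ld t ∧ t.left = white ∧ t.down = white) ∧
  (∃ t ∈ T, label rd t ∧ t.right = white ∧ t.down = white) ∧
  (∃ t ∈ T, label lu t ∧ t.left = white ∧ t.up = white) ∧
  (∃ t ∈ T, label ru t ∧ t.right = white ∧ t.up = white)

/-- (SHori): every r*-reachable element d ≠ ru carrying t has r-successors, all of
which carry one fixed tile t' that is H-compatible with t, with the border
conditions (ii) and (iii). -/
def SHori {Col α : Type} (T : Set (Tile Col)) (white : Col) (r : α → α → Prop)
    (label : α → Tile Col → Prop) (ld ru : α) : Prop :=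
  ∀ d t, Relation.ReflTransGen r ld d → d ≠ ru → t ∈ T → label d t →
    ∃ t' ∈ T, (∃ e, r d e) ∧ (∀ e, r d e → label e t') ∧ HCompat t t' ∧
      (t.down = white → (t.right ≠ white ↔ t'.down = white)) ∧
      (t.up = white → t'.up = white)

/-- (SLen) for a fixed N: all r⁺-paths from ld to rd have length N−1, and rd is
the only element r^{N−1}-reachable from ld. -/
def SLenN {α : Type} (r : α → α → Prop) (ld rd : α) (N : ℕ) : Prop :=
  0 < N ∧ (∀ k, 0 < k → ReachN r k ld rd → k = N - 1) ∧
  (∀ e, ReachN r (N - 1) ld e → e = rd)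

/-- (SVerti) for a fixed N: every r*-reachable element carrying a non-up-border
tile t has all its r^N-reachable elements carrying one fixed V-compatible tile t'
with matching left/right borders. -/
def SVertiN {Col α : Type} (T : Set (Tile Col)) (white : Col) (r : α → α → Prop)
    (label : α → Tile Col → Prop) (ld : α) (N : ℕ) : Prop :=
  ∀ d t, Relation.ReflTransGen r ld d → t ∈ T → label d t → t.up ≠ white →
    ∃ t' ∈ T, (∀ e, ReachN r N d e → label e t') ∧ VCompat t t' ∧
      (t.left = white ↔ t'.left = white) ∧ (t.right = white ↔ t'.right = white)

/-- A D-pseudosnake: (SPath), (SNoLoop), (SUniqTil), (SSpecTil), (SHori). -/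
def IsPseudoSnake {Col α : Type} (T : Set (Tile Col)) (white : Col)
    (r : α → α → Prop) (label : α → Tile Col → Prop) (ld rd lu ru : α) : Prop :=
  SPath r ld rd lu ru ∧ SNoLoop r ld rd lu ru ∧ SUniqTil T r label ld ∧
  SSpecTil T white r label ld rd lu ru ∧ SHori T white r label ld ru

/-- A D-snake: a D-pseudosnake that additionally satisfies (SLen) for a unique
positive integer N, and (SVerti) for that N. -/
def IsSnake {Col α : Type} (T : Set (Tile Col)) (white : Col)
    (r : α → α → Prop) (label : α → Tile Col → Prop) (ld rd lu ru : α) : Prop :=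
  IsPseudoSnake T white r label ld rd lu ru ∧
  ∃ N : ℕ, SLenN r ld rd N ∧ SVertiN T white r label ld N ∧
    ∀ N', SLenN r ld rd N' → N' = N

/-- ξ covers the n × m grid: tiles from T, white sides exactly on the borders,
horizontal and vertical compatibility. -/
def Covers {Col : Type} (T : Set (Tile Col)) (white : Col) (n m : ℕ)
    (ξ : ℕ → ℕ → Tile Col) : Prop :=
  ∀ x y, x < n → y < m →
    ξ x y ∈ T ∧
    ((ξ x y).left = white ↔ x = 0) ∧ ((ξ x y).right = white ↔ x = n - 1) ∧
    ((ξ x y).down = white ↔ y = 0) ∧ ((ξ x y).up = white ↔ y = m - 1) ∧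
    (x + 1 < n → HCompat (ξ x y) (ξ (x + 1) y)) ∧
    (y + 1 < m → VCompat (ξ x y) (ξ x (y + 1)))

/-!
The linearization lists the grid row by row, so position `i` has coordinates
`(i % n, i / n)`. The successor of `i` is its right neighbour, or the first cell of the next row
when `i` ends a row; the element `n` steps further is its upper neighbour. Each snake condition
thus becomes a property of the covering at one or two grid cells. Since no tile has three white
sides, `n, m ≥ 2`, so the four corners are distinct and are the only cells with two white sides.
-/

open Relation

def finSuccRel (M : ℕ) (i j : Fin M) : Prop := (j : ℕ) = i + 1

theorem transGen_of_reachN_succ {α : Type} {r : α → α → Prop} :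
    ∀ {k : ℕ} {a b : α}, ReachN r (k + 1) a b → TransGen r a b
  | 0, _, _, ⟨_, hac, rfl⟩ => .single hac
  | _ + 1, _, _, ⟨_, hac, hcb⟩ => .head hac (transGen_of_reachN_succ hcb)

section FinSuccRel

variable {M : ℕ}

theorem reachN_finSuccRel_iff {k : ℕ} {a b : Fin M} :
    ReachN (finSuccRel M) k a b ↔ (b : ℕ) = a + k := by
  induction k generalizing a with
  | zero => simp [ReachN, Fin.ext_iff, eq_comm]
  | succ k ih =>
    simp only [ReachN, ih]
    constructor
    · rintro ⟨c, hc, hcb⟩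
      rw [finSuccRel] at hc
      omega
    · intro hb
      exact ⟨⟨a + 1, by omega⟩, rfl, by simp only; omega⟩

theorem transGen_finSuccRel_iff {a b : Fin M} : TransGen (finSuccRel M) a b ↔ a < b := by
  refine ⟨fun h => ?_, fun h => transGen_of_reachN_succ (k := b - a - 1) ?_⟩
  · induction h with
    | single h => rw [finSuccRel] at h; omega
    | tail _ h ih => rw [finSuccRel] at h; omega
  · rw [reachN_finSuccRel_iff]
    omega

theorem sPath_finSuccRel {a b c d : Fin M} (hab : a < b) (hbc : b < c) (hcd : c < d) :
    SPath (finSuccRel M) a b c d :=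
  ⟨transGen_finSuccRel_iff.2 hab, transGen_finSuccRel_iff.2 hbc, transGen_finSuccRel_iff.2 hcd⟩

theorem sNoLoop_finSuccRel (a b c d : Fin M) : SNoLoop (finSuccRel M) a b c d := by
  simp only [SNoLoop, transGen_finSuccRel_iff, lt_irrefl, not_false_eq_true, and_self]

theorem sLenN_finSuccRel_iff {a b : Fin M} (hab : a < b) {N : ℕ} :
    SLenN (finSuccRel M) a b N ↔ N = b - a + 1 := by
  simp only [SLenN, reachN_finSuccRel_iff, Fin.ext_iff]
  constructor
  · rintro ⟨-, hlen, -⟩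
    have := hlen (b - a) (by omega) (by omega)
    omega
  · rintro rfl
    refine ⟨by omega, fun k _ hk => by omega, fun e he => by omega⟩

end FinSuccRel

theorem Nat.add_mul_mod_div {n x : ℕ} (y : ℕ) (hx : x < n) :
    (x + y * n) % n = x ∧ (x + y * n) / n = y := by
  have hn : 0 < n := by omega
  rw [Nat.add_mul_mod_self_right, Nat.mod_eq_of_lt hx, Nat.add_mul_div_right _ _ hn,
    Nat.div_eq_of_lt hx, Nat.zero_add]
  exact ⟨rfl, rfl⟩

theorem Nat.exists_add_mul_eq {n m i : ℕ} (hi : i < n * m) :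
    ∃ x < n, ∃ y < m, i = x + y * n := by
  have hn : 0 < n := Nat.pos_of_ne_zero (by rintro rfl; simp at hi)
  exact ⟨i % n, Nat.mod_lt i hn, i / n, Nat.div_lt_of_lt_mul hi, (Nat.mod_add_div' i n).symm⟩

theorem Nat.mul_sub_one_eq_sub_one_add {n m : ℕ} (hn : 0 < n) (hm : 0 < m) :
    n * m - 1 = (n - 1) + (m - 1) * n := by
  obtain ⟨n, rfl⟩ : ∃ k, n = k + 1 := ⟨n - 1, by omega⟩
  obtain ⟨m, rfl⟩ : ∃ k, m = k + 1 := ⟨m - 1, by omega⟩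
  simp only [Nat.add_sub_cancel]
  ring_nf
  omega

theorem Nat.add_mul_inj {n x x' y y' : ℕ} (hx : x < n) (hx' : x' < n) :
    x + y * n = x' + y' * n ↔ x = x' ∧ y = y' := by
  refine ⟨fun h => ?_, fun ⟨hx, hy⟩ => hx ▸ hy ▸ rfl⟩
  have h₁ := Nat.add_mul_mod_div y hx
  have h₂ := Nat.add_mul_mod_div y' hx'
  rw [h] at h₁
  exact ⟨h₁.1.symm.trans h₂.1, h₁.2.symm.trans h₂.2⟩

theorem Nat.add_mul_eq_corner_iff {n m x y : ℕ} (hx : x < n) (hy : y < m) :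
    (x + y * n = 0 ∨ x + y * n = n - 1 ∨ x + y * n = (m - 1) * n ∨ x + y * n = n * m - 1) ↔
      (x = 0 ∨ x = n - 1) ∧ (y = 0 ∨ y = m - 1) := by
  have hn : 0 < n := by omega
  have hn' : n - 1 < n := by omega
  have hru := Nat.mul_sub_one_eq_sub_one_add hn (by omega : 0 < m)
  constructor
  · rintro (h | h | h | h)
    · obtain ⟨rfl, rfl⟩ := (Nat.add_mul_inj (y' := 0) hx hn).1 (by simpa using h)
      simp
    · obtain ⟨rfl, rfl⟩ := (Nat.add_mul_inj (y' := 0) hx hn').1 (by simpa using h)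
      simp
    · obtain ⟨rfl, rfl⟩ := (Nat.add_mul_inj (x' := 0) hx hn).1 (by simpa using h)
      simp
    · obtain ⟨rfl, rfl⟩ := (Nat.add_mul_inj hx hn').1 (h.trans hru)
      simp
  · rintro ⟨rfl | rfl, rfl | rfl⟩ <;> simp [hru]

def rowMajor {Col : Type} (n : ℕ) (ξ : ℕ → ℕ → Tile Col) (i : ℕ) : Tile Col := ξ (i % n) (i / n)

theorem rowMajor_add_mul {Col : Type} {n x : ℕ} (ξ : ℕ → ℕ → Tile Col) (y : ℕ) (hx : x < n) :
    rowMajor n ξ (x + y * n) = ξ x y := by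
  rw [rowMajor, (Nat.add_mul_mod_div y hx).1, (Nat.add_mul_mod_div y hx).2]

theorem rowMajor_of_eq {Col : Type} {n x y i : ℕ} {ξ : ℕ → ℕ → Tile Col} (hi : i = x + y * n)
    (hx : x < n) : rowMajor n ξ i = ξ x y :=
  hi ▸ rowMajor_add_mul ξ y hx

theorem sUniqTil_of_mem {Col α : Type} {T : Set (Tile Col)} {r : α → α → Prop}
    {f : α → Tile Col} (hf : ∀ a, f a ∈ T) (ld : α) : SUniqTil T r (fun a t => t = f a) ld :=
  fun a _ => ⟨f a, ⟨hf a, rfl⟩, fun _ h => h.2⟩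

/-- What (SHori) demands of a tile `t` and the tile `t'` of its successor. -/
def HoriStep {Col : Type} (white : Col) (t t' : Tile Col) : Prop :=
  HCompat t t' ∧ (t.down = white → (t.right ≠ white ↔ t'.down = white)) ∧
    (t.up = white → t'.up = white)

section Covers

variable {Col : Type} {T : Set (Tile Col)} {white : Col} {n m : ℕ} {ξ : ℕ → ℕ → Tile Col}

theorem Covers.two_le_width (hT : ∀ t ∈ T, ¬ ThreeWhite white t) (hξ : Covers T white n m ξ)
    (hn : 0 < n) (hm : 0 < m) : 2 ≤ n := by
  by_contra h
  obtain ⟨hmem, hl, hr, hd, -⟩ := hξ 0 0 hn hm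
  exact hT _ hmem (.inl ⟨hl.2 rfl, hd.2 rfl, hr.2 (by omega)⟩)

theorem Covers.two_le_height (hT : ∀ t ∈ T, ¬ ThreeWhite white t) (hξ : Covers T white n m ξ)
    (hn : 0 < n) (hm : 0 < m) : 2 ≤ m := by
  by_contra h
  obtain ⟨hmem, hl, -, hd, hu, -⟩ := hξ 0 0 hn hm
  exact hT _ hmem (.inr (.inl ⟨hl.2 rfl, hd.2 rfl, hu.2 (by omega)⟩))

theorem Covers.twoWhite_iff (hξ : Covers T white n m ξ) (hn : 2 ≤ n) (hm : 2 ≤ m) {x y : ℕ}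
    (hx : x < n) (hy : y < m) :
    TwoWhite white (ξ x y) ↔ (x = 0 ∨ x = n - 1) ∧ (y = 0 ∨ y = m - 1) := by
  obtain ⟨-, hl, hr, hd, hu, -⟩ := hξ x y hx hy
  rw [TwoWhite, hl, hr, hd, hu]
  omega

theorem Covers.rowMajor_mem (hξ : Covers T white n m ξ) {i : ℕ} (hi : i < n * m) :
    rowMajor n ξ i ∈ T := by
  obtain ⟨x, hx, y, hy, rfl⟩ := Nat.exists_add_mul_eq hi
  rw [rowMajor_add_mul ξ y hx]
  exact (hξ x y hx hy).1

theorem Covers.horiStep (hξ : Covers T white n m ξ) {i : ℕ} (hi : i + 1 < n * m) :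
    HoriStep white (rowMajor n ξ i) (rowMajor n ξ (i + 1)) := by
  obtain ⟨x, hx, y, hy, rfl⟩ := Nat.exists_add_mul_eq (n := n) (m := m) (i := i) (by omega)
  obtain ⟨-, hl, hr, hd, hu, hH, -⟩ := hξ x y hx hy
  rw [rowMajor_add_mul ξ y hx]
  by_cases hrow : x + 1 < n
  · rw [rowMajor_of_eq (y := y) (by ring) hrow]
    obtain ⟨-, -, -, hd', hu', -⟩ := hξ (x + 1) y hrow hy
    refine ⟨hH hrow, ?_, ?_⟩ <;> simp only [hd, hr, hu, hd', hu', ne_eq] <;> omega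
  · have hy' : y + 1 < m := by
      refine Nat.lt_of_mul_lt_mul_right (a := n) ?_
      rw [Nat.mul_comm m n]
      linarith
    have hn : 0 < n := by omega
    rw [rowMajor_of_eq (x := 0) (y := y + 1) (by rw [Nat.add_mul]; omega) hn]
    obtain ⟨-, hl', -, hd', -⟩ := hξ 0 (y + 1) hn hy'
    refine ⟨(hr.2 (by omega)).trans (hl'.2 rfl).symm, ?_, fun h => absurd (hu.1 h) (by omega)⟩
    simp only [hd, hr, hd', ne_eq]
    omega

theorem Covers.sSpecTil (hξ : Covers T white n m ξ) (hn : 2 ≤ n) (hm : 2 ≤ m)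
    {ld rd lu ru : Fin (n * m)} (hld : (ld : ℕ) = 0) (hrd : (rd : ℕ) = n - 1)
    (hlu : (lu : ℕ) = (m - 1) * n) (hru : (ru : ℕ) = n * m - 1) :
    SSpecTil T white (finSuccRel (n * m)) (fun i t => t = rowMajor n ξ i) ld rd lu ru := by
  have hru' := Nat.mul_sub_one_eq_sub_one_add (n := n) (m := m) (by omega) (by omega)
  obtain ⟨hmem₀₀, hl₀₀, -, hd₀₀, -⟩ := hξ 0 0 (by omega) (by omega)
  obtain ⟨hmem₁₀, -, hr₁₀, hd₁₀, -⟩ := hξ (n - 1) 0 (by omega) (by omega)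
  obtain ⟨hmem₀₁, hl₀₁, -, -, hu₀₁, -⟩ := hξ 0 (m - 1) (by omega) (by omega)
  obtain ⟨hmem₁₁, -, hr₁₁, -, hu₁₁, -⟩ := hξ (n - 1) (m - 1) (by omega) (by omega)
  refine ⟨fun d _ => ?_,
    ⟨_, hmem₀₀, (rowMajor_of_eq (by simpa using hld) (by omega)).symm, hl₀₀.2 rfl, hd₀₀.2 rfl⟩,
    ⟨_, hmem₁₀, (rowMajor_of_eq (by simpa using hrd) (by omega)).symm, hr₁₀.2 rfl, hd₁₀.2 rfl⟩,
    ⟨_, hmem₀₁, (rowMajor_of_eq (by simpa using hlu) (by omega)).symm, hl₀₁.2 rfl, hu₀₁.2 rfl⟩,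
    ⟨_, hmem₁₁, (rowMajor_of_eq (hru.trans hru') (by omega)).symm, hr₁₁.2 rfl, hu₁₁.2 rfl⟩⟩
  obtain ⟨x, hx, y, hy, hd⟩ := Nat.exists_add_mul_eq d.isLt
  have hlabel : (∃ t, t ∈ T ∧ t = rowMajor n ξ d ∧ TwoWhite white t) ↔
      TwoWhite white (rowMajor n ξ d) :=
    ⟨fun ⟨_, _, ht, h⟩ => ht ▸ h, fun h => ⟨_, hξ.rowMajor_mem d.isLt, rfl, h⟩⟩
  simp only [hlabel, Fin.ext_iff, hld, hrd, hlu, hru]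
  rw [hd, rowMajor_add_mul ξ y hx, hξ.twoWhite_iff hn hm hx hy, Nat.add_mul_eq_corner_iff hx hy]

theorem Covers.sHori (hξ : Covers T white n m ξ) (ld : Fin (n * m)) {ru : Fin (n * m)}
    (hru : (ru : ℕ) = n * m - 1) :
    SHori T white (finSuccRel (n * m)) (fun i t => t = rowMajor n ξ i) ld ru := by
  rintro d t - hne - rfl
  have hd : (d : ℕ) + 1 < n * m := by
    have := Fin.val_ne_of_ne hne
    omega
  obtain ⟨hH, hdown, hup⟩ := hξ.horiStep hd
  refine ⟨_, hξ.rowMajor_mem hd, ⟨⟨_, hd⟩, rfl⟩, fun e he => ?_, hH, hdown, hup⟩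
  rw [finSuccRel] at he
  rw [he]

theorem Covers.sVertiN (hξ : Covers T white n m ξ) (ld : Fin (n * m)) :
    SVertiN T white (finSuccRel (n * m)) (fun i t => t = rowMajor n ξ i) ld n := by
  rintro d t - - rfl hup
  obtain ⟨x, hx, y, hy, hd⟩ := Nat.exists_add_mul_eq d.isLt
  rw [hd, rowMajor_add_mul ξ y hx] at hup ⊢
  obtain ⟨-, hl, hr, -, hu, -, hV⟩ := hξ x y hx hy
  have hy' : y + 1 < m := by
    rw [ne_eq, hu] at hup
    omega
  obtain ⟨hmem', hl', hr', -⟩ := hξ x (y + 1) hx hy'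
  refine ⟨_, hmem', fun e he => ?_, hV hy', by rw [hl, hl'], by rw [hr, hr']⟩
  rw [reachN_finSuccRel_iff, hd] at he
  rw [he, rowMajor_of_eq (y := y + 1) (by ring) hx]

end Covers

/-- If a domino tiling system D (with no tile having more than two white sides)
covers ℤₙ × ℤₘ via ξ, then the linearization of ξ — domain ℤ_{n·m}, r-edges
{(i, i+1)}, element x + y·n labelled by ξ(x, y), and named elements ld = 0,
rd = n−1, lu = (m−1)·n, ru = m·n−1 — is a D-snake. -/
theorem covering_gives_snake {Col : Type} (T : Set (Tile Col)) (white : Col)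
    (hT : ∀ t ∈ T, ¬ ThreeWhite white t)
    (n m : ℕ) (hn : 0 < n) (hm : 0 < m)
    (ξ : ℕ → ℕ → Tile Col) (hξ : Covers T white n m ξ) :
    IsSnake T white
      (fun i j : Fin (n * m) => (j : ℕ) = (i : ℕ) + 1)
      (fun (i : Fin (n * m)) (t : Tile Col) => t = ξ ((i : ℕ) % n) ((i : ℕ) / n))
      ⟨0, Nat.mul_pos hn hm⟩
      ⟨n - 1, by
        have h1 : n ≤ n * m := Nat.le_mul_of_pos_right n hm
        omega⟩
      ⟨(m - 1) * n, by
        have h1 : (m - 1) * n = m * n - n := Nat.sub_one_mul m n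
        have h2 : n ≤ m * n := Nat.le_mul_of_pos_left n hm
        have h3 : m * n = n * m := Nat.mul_comm m n
        omega⟩
      ⟨n * m - 1, Nat.sub_lt (Nat.mul_pos hn hm) one_pos⟩ := by
  have hn₂ := hξ.two_le_width hT hn hm
  have hm₂ := hξ.two_le_height hT hn hm
  have hru := Nat.mul_sub_one_eq_sub_one_add hn hm
  have hlu : n ≤ (m - 1) * n := Nat.le_mul_of_pos_left n (by omega)
  refine ⟨⟨sPath_finSuccRel ?_ ?_ ?_, sNoLoop_finSuccRel _ _ _ _,
    sUniqTil_of_mem (fun i => hξ.rowMajor_mem i.isLt) _,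
    hξ.sSpecTil hn₂ hm₂ rfl rfl rfl rfl, hξ.sHori _ rfl⟩,
    n, (sLenN_finSuccRel_iff ?_).2 ?_, hξ.sVertiN _, fun N h => (sLenN_finSuccRel_iff ?_).1 h ▸ ?_⟩
  all_goals simp only [Fin.mk_lt_mk]; omega
end

section
/- Let ξ : 𝕆 → T be a map from the octant 𝕆 = { (n,m) : 0 ≤ m ≤ n } to the tiles of a white-bordered tiling system D that covers 𝕆. Then for all i ∈ ℕ, ξ(i, i) is the all-white tile, ξ(i+1, i) is left- and up-bordered, and no position (i, j) with 0 < j < i−1 carries a tile containing the white colour. -/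
/-- The all-white tile. -/
def whiteTile {Col : Type} (white : Col) : Tile Col :=
  ⟨white, white, white, white⟩

/-- A white-bordered tiling system: the all-white tile belongs to T, and every
other tile of T containing white is both left- and up-border but neither down-
nor right-border. -/
def WhiteBordered {Col : Type} (T : Set (Tile Col)) (white : Col) : Prop :=
  whiteTile white ∈ T ∧
  ∀ t ∈ T, t ≠ whiteTile white →
    (t.left = white ∨ t.down = white ∨ t.right = white ∨ t.up = white) →
    (t.left = white ∧ t.up = white ∧ t.down ≠ white ∧ t.right ≠ white)

/-- ξ covers the octant 𝕆 = { (n, m) : m ≤ n }: tiles of T everywhere on 𝕆, and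
conditions (OInit), (OVerti), (OHori). -/
def CoversOctant {Col : Type} (T : Set (Tile Col)) (white : Col)
    (ξ : ℕ → ℕ → Tile Col) : Prop :=
  (∀ n m : ℕ, m ≤ n → ξ n m ∈ T) ∧
  -- (OInit)
  (ξ 0 0 = whiteTile white ∧ ξ 1 0 ≠ whiteTile white) ∧
  -- (OVerti)
  (∀ n m : ℕ, m + 1 ≤ n → VCompat (ξ n m) (ξ n (m + 1))) ∧
  -- (OHori)
  (∀ n m : ℕ, m ≤ n → HCompat (ξ n m) (ξ (n + 1) m))

/-!
White can only enter a non-white tile through its left and up sides, and a tile with a white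
right or down side is all-white. Reading (OHori) and (OVerti) through these rules, whiteness
propagates leftwards along rows, so the all-white tile at the origin spreads up the diagonal,
while the non-white tile at `(1, 0)` spreads up the subdiagonal and then rightwards along rows.
-/

namespace WhiteBordered

variable {Col : Type} {T : Set (Tile Col)} {white : Col} {t : Tile Col}

theorem eq_whiteTile_of_right_eq (hW : WhiteBordered T white) (ht : t ∈ T)
    (hr : t.right = white) : t = whiteTile white := by
  by_contra hne
  exact (hW.2 t ht hne (.inr (.inr (.inl hr)))).2.2.2 hr

theorem eq_whiteTile_of_down_eq (hW : WhiteBordered T white) (ht : t ∈ T)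
    (hd : t.down = white) : t = whiteTile white := by
  by_contra hne
  exact (hW.2 t ht hne (.inr (.inl hd))).2.2.1 hd

theorem up_eq_of_left_eq (hW : WhiteBordered T white) (ht : t ∈ T)
    (hl : t.left = white) : t.up = white := by
  by_cases hne : t = whiteTile white
  · rw [hne]; rfl
  · exact (hW.2 t ht hne (.inl hl)).2.1

theorem left_eq_of_up_eq (hW : WhiteBordered T white) (ht : t ∈ T)
    (hu : t.up = white) : t.left = white := by
  by_cases hne : t = whiteTile white
  · rw [hne]; rfl
  · exact (hW.2 t ht hne (.inr (.inr (.inr hu)))).1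

theorem forall_ne_of_left_ne (hW : WhiteBordered T white) (ht : t ∈ T)
    (hne : t ≠ whiteTile white) (hl : t.left ≠ white) :
    t.left ≠ white ∧ t.down ≠ white ∧ t.right ≠ white ∧ t.up ≠ white := by
  have hwhite := fun h => hl (hW.2 t ht hne h).1
  exact ⟨hl, fun h => hwhite (.inr (.inl h)), fun h => hwhite (.inr (.inr (.inl h))),
    fun h => hwhite (.inr (.inr (.inr h)))⟩

end WhiteBordered

namespace CoversOctant

variable {Col : Type} {T : Set (Tile Col)} {white : Col} {ξ : ℕ → ℕ → Tile Col}

theorem left_succ_eq_of_eq_whiteTile (hξ : CoversOctant T white ξ) {n j : ℕ} (hjn : j ≤ n)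
    (h : ξ n j = whiteTile white) : (ξ (n + 1) j).left = white := by
  rw [← hξ.2.2.2 n j hjn, h]; rfl

theorem eq_whiteTile_of_left_succ_eq (hW : WhiteBordered T white)
    (hξ : CoversOctant T white ξ) {n j : ℕ} (hjn : j ≤ n) (h : (ξ (n + 1) j).left = white) :
    ξ n j = whiteTile white :=
  hW.eq_whiteTile_of_right_eq (hξ.1 n j hjn) (by rw [hξ.2.2.2 n j hjn, h])

theorem subdiag_ne_whiteTile (hW : WhiteBordered T white) (hξ : CoversOctant T white ξ)
    (n : ℕ) : ξ (n + 1) n ≠ whiteTile white := by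
  induction n with
  | zero => exact hξ.2.1.2
  | succ k ih =>
    intro hw
    have hup : (ξ (k + 2) k).up = white := by rw [hξ.2.2.1 (k + 2) k (by omega), hw]; rfl
    exact ih (hξ.eq_whiteTile_of_left_succ_eq hW (by omega)
      (hW.left_eq_of_up_eq (hξ.1 _ _ (by omega)) hup))

theorem ne_whiteTile_of_lt (hW : WhiteBordered T white) (hξ : CoversOctant T white ξ)
    {n j : ℕ} (hjn : j < n) : ξ n j ≠ whiteTile white := by
  induction n, hjn using Nat.le_induction with
  | base => exact hξ.subdiag_ne_whiteTile hW j
  | succ n hlt ih =>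
    exact fun hw => ih (hξ.eq_whiteTile_of_left_succ_eq hW (by omega) (by rw [hw]; rfl))

theorem diag_eq_whiteTile (hW : WhiteBordered T white) (hξ : CoversOctant T white ξ)
    (i : ℕ) : ξ i i = whiteTile white := by
  induction i with
  | zero => exact hξ.2.1.1
  | succ k ih =>
    have hup : (ξ (k + 1) k).up = white :=
      hW.up_eq_of_left_eq (hξ.1 _ _ (by omega)) (hξ.left_succ_eq_of_eq_whiteTile le_rfl ih)
    exact hW.eq_whiteTile_of_down_eq (hξ.1 _ _ le_rfl)
      (by rw [← hξ.2.2.1 (k + 1) k le_rfl, hup])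

end CoversOctant

/-- If a white-bordered tiling system D covers the octant via ξ, then for every
i, ξ(i, i) is the all-white tile, ξ(i+1, i) is left- and up-bordered, and no
position (i, j) with 0 < j < i−1 carries a tile containing white. -/
theorem octant_covering_white_diagonal {Col : Type} (T : Set (Tile Col))
    (white : Col) (hW : WhiteBordered T white)
    (ξ : ℕ → ℕ → Tile Col) (hξ : CoversOctant T white ξ) :
    ∀ i : ℕ,
      ξ i i = whiteTile white ∧
      ((ξ (i + 1) i).left = white ∧ (ξ (i + 1) i).up = white) ∧
      ∀ j : ℕ, 0 < j → j + 1 < i →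
        (ξ i j).left ≠ white ∧ (ξ i j).down ≠ white ∧
        (ξ i j).right ≠ white ∧ (ξ i j).up ≠ white := by
  intro i
  have hdiag := hξ.diag_eq_whiteTile hW i
  have hleft := hξ.left_succ_eq_of_eq_whiteTile le_rfl hdiag
  refine ⟨hdiag, ⟨hleft, hW.up_eq_of_left_eq (hξ.1 _ _ (by omega)) hleft⟩, ?_⟩
  intro j _ hji
  obtain ⟨k, rfl⟩ : ∃ k, i = k + 1 := ⟨i - 1, by omega⟩
  have hleft_ne : (ξ (k + 1) j).left ≠ white := fun hl =>
    hξ.ne_whiteTile_of_lt hW (by omega) (hξ.eq_whiteTile_of_left_succ_eq hW (by omega) hl)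
  exact hW.forall_ne_of_left_ne (hξ.1 _ _ (by omega)) (hξ.ne_whiteTile_of_lt hW (by omega))
    hleft_ne
end

section
/- A domino tiling system D (without white-bordered tiles) almost covers the octant if and only if the augmented system D' covers the octant (in the white-bordered sense), where D' adds to the tile set T the all-white tile and, for each tile (c_l, c_d, c_r, c_u) ∈ T, the tile (white, c_d, c_r, white). -/
/-- ξ almost covers the octant: tiles of T on 𝕆 with (OVerti) and (OHori),
but not necessarily (OInit). -/
def AlmostCoversOctant {Col : Type} (T : Set (Tile Col))
    (ξ : ℕ → ℕ → Tile Col) : Prop :=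
  (∀ n m : ℕ, m ≤ n → ξ n m ∈ T) ∧
  (∀ n m : ℕ, m + 1 ≤ n → VCompat (ξ n m) (ξ n (m + 1))) ∧
  (∀ n m : ℕ, m ≤ n → HCompat (ξ n m) (ξ (n + 1) m))

/-- The augmented tile set T' of the system D': the all-white tile, the tiles of
T, and for each (c_l, c_d, c_r, c_u) ∈ T the tile (white, c_d, c_r, white). -/
def augment {Col : Type} (T : Set (Tile Col)) (white : Col) : Set (Tile Col) :=
  insert (whiteTile white)
    (T ∪ {t' | ∃ t ∈ T, t' = ⟨white, t.down, t.right, white⟩})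

def whitenLeftUp {Col : Type} (white : Col) (t : Tile Col) : Tile Col :=
  ⟨white, t.down, t.right, white⟩

section Augment

variable {Col : Type} {T : Set (Tile Col)} {white : Col} {t : Tile Col}

theorem whiteTile_mem_augment : whiteTile white ∈ augment T white :=
  Set.mem_insert _ _

theorem mem_augment_of_mem (ht : t ∈ T) : t ∈ augment T white :=
  Set.mem_insert_of_mem _ (Or.inl ht)

theorem whitenLeftUp_mem_augment (ht : t ∈ T) : whitenLeftUp white t ∈ augment T white :=
  Set.mem_insert_of_mem _ (Or.inr ⟨t, ht, rfl⟩)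

theorem mem_of_mem_augment_of_left_ne (ht : t ∈ augment T white) (hl : t.left ≠ white) :
    t ∈ T := by
  rcases ht with rfl | ht | ⟨s, -, rfl⟩
  · exact absurd rfl hl
  · exact ht
  · exact absurd rfl hl

theorem right_ne_of_mem_augment (hT : ∀ t ∈ T, t.right ≠ white) (ht : t ∈ augment T white)
    (hne : t ≠ whiteTile white) : t.right ≠ white := by
  rcases ht with rfl | ht | ⟨s, hs, rfl⟩
  · exact absurd rfl hne
  · exact hT t ht
  · exact hT s hs

end Augment

section Forward

variable {Col : Type} (white : Col) (ξ : ℕ → ℕ → Tile Col)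

def padOctant : ℕ → ℕ → Tile Col
  | 0, _ => whiteTile white
  | n + 1, m =>
    if m < n then ξ n m else if m = n then whitenLeftUp white (ξ n m) else whiteTile white

@[simp]
theorem padOctant_self (n : ℕ) : padOctant white ξ n n = whiteTile white := by
  cases n <;> simp [padOctant]

@[simp]
theorem padOctant_succ_self (n : ℕ) :
    padOctant white ξ (n + 1) n = whitenLeftUp white (ξ n n) := by
  simp [padOctant]

theorem padOctant_succ_of_lt {n m : ℕ} (h : m < n) : padOctant white ξ (n + 1) m = ξ n m := by
  simp [padOctant, h]

theorem padOctant_succ_down {n m : ℕ} (h : m ≤ n) :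
    (padOctant white ξ (n + 1) m).down = (ξ n m).down := by
  rcases h.lt_or_eq with h | rfl
  · rw [padOctant_succ_of_lt white ξ h]
  · simp [whitenLeftUp]

theorem padOctant_succ_right {n m : ℕ} (h : m ≤ n) :
    (padOctant white ξ (n + 1) m).right = (ξ n m).right := by
  rcases h.lt_or_eq with h | rfl
  · rw [padOctant_succ_of_lt white ξ h]
  · simp [whitenLeftUp]

variable {white ξ} {T : Set (Tile Col)}

theorem padOctant_mem_augment (hξ : ∀ n m : ℕ, m ≤ n → ξ n m ∈ T) {n m : ℕ} (h : m ≤ n) :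
    padOctant white ξ n m ∈ augment T white := by
  rcases h.lt_or_eq with h | rfl
  · obtain ⟨k, rfl⟩ : ∃ k, n = k + 1 := Nat.exists_eq_add_one_of_ne_zero (by omega)
    rcases (Nat.lt_succ_iff.mp h).lt_or_eq with h | rfl
    · rw [padOctant_succ_of_lt white ξ h]
      exact mem_augment_of_mem (hξ k m h.le)
    · rw [padOctant_succ_self]
      exact whitenLeftUp_mem_augment (hξ m m le_rfl)
  · rw [padOctant_self]
    exact whiteTile_mem_augment

theorem padOctant_vCompat (hv : ∀ n m : ℕ, m + 1 ≤ n → VCompat (ξ n m) (ξ n (m + 1)))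
    {n m : ℕ} (h : m + 1 ≤ n) : VCompat (padOctant white ξ n m) (padOctant white ξ n (m + 1)) := by
  obtain ⟨k, rfl⟩ : ∃ k, n = k + 1 := Nat.exists_eq_add_one_of_ne_zero (by omega)
  rcases (Nat.succ_le_succ_iff.mp h).lt_or_eq with h | rfl
  · rw [VCompat, padOctant_succ_of_lt white ξ h, padOctant_succ_down white ξ h]
    exact hv k m h
  · simp [VCompat, whitenLeftUp, whiteTile]

theorem padOctant_hCompat (hh : ∀ n m : ℕ, m ≤ n → HCompat (ξ n m) (ξ (n + 1) m))
    {n m : ℕ} (h : m ≤ n) : HCompat (padOctant white ξ n m) (padOctant white ξ (n + 1) m) := by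
  rcases h.lt_or_eq with h | rfl
  · obtain ⟨k, rfl⟩ : ∃ k, n = k + 1 := Nat.exists_eq_add_one_of_ne_zero (by omega)
    rw [HCompat, padOctant_succ_right white ξ (Nat.lt_succ_iff.mp h),
      padOctant_succ_of_lt white ξ h]
    exact hh k m (Nat.lt_succ_iff.mp h)
  · simp [HCompat, whitenLeftUp, whiteTile]

theorem coversOctant_padOctant (hT : ∀ t ∈ T, t.down ≠ white) (hξ : AlmostCoversOctant T ξ) :
    CoversOctant (augment T white) white (padOctant white ξ) := by
  obtain ⟨hmem, hv, hh⟩ := hξ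
  refine ⟨fun n m => padOctant_mem_augment hmem, ⟨padOctant_self white ξ 0, ?_⟩,
    fun n m => padOctant_vCompat hv, fun n m => padOctant_hCompat hh⟩
  rw [padOctant_succ_self]
  exact fun h => hT _ (hmem 0 0 le_rfl) (congrArg Tile.down h)

end Forward

section Backward

variable {Col : Type} {T : Set (Tile Col)} {white : Col} {ξ : ℕ → ℕ → Tile Col}

theorem CoversOctant.succ_ne_whiteTile_and_add_two_mem
    (hT : ∀ t ∈ T, t.right ≠ white ∧ t.up ≠ white) (hξ : CoversOctant (augment T white) white ξ) :
    ∀ n m : ℕ, m ≤ n → ξ (n + 1) m ≠ whiteTile white ∧ ξ (n + 2) m ∈ T := by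
  obtain ⟨hmem, ⟨-, hinit⟩, hv, hh⟩ := hξ
  have next : ∀ n m, m ≤ n → ξ (n + 1) m ≠ whiteTile white → ξ (n + 2) m ∈ T := by
    intro n m h hne
    refine mem_of_mem_augment_of_left_ne (hmem _ _ (by omega)) ?_
    rw [← hh (n + 1) m (by omega)]
    exact right_ne_of_mem_augment (fun t ht => (hT t ht).1) (hmem _ _ (by omega)) hne
  intro n
  induction n with
  | zero =>
    intro m hm
    obtain rfl := Nat.le_zero.mp hm
    exact ⟨hinit, next 0 0 le_rfl hinit⟩
  | succ n ih =>
    suffices hne : ∀ m, m ≤ n + 1 → ξ (n + 2) m ≠ whiteTile white from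
      fun m hm => ⟨hne m hm, next (n + 1) m hm (hne m hm)⟩
    rintro (_ | m) hm hwhite
    · exact (hT _ (ih 0 (Nat.zero_le n)).2).1 (by rw [hwhite]; rfl)
    · have hup := (hT _ (ih m (by omega)).2).2
      rw [hv (n + 2) m (by omega), hwhite] at hup
      exact hup rfl

theorem CoversOctant.almostCoversOctant_add_two
    (hT : ∀ t ∈ T, t.right ≠ white ∧ t.up ≠ white) (hξ : CoversOctant (augment T white) white ξ) :
    AlmostCoversOctant T (fun n m => ξ (n + 2) m) :=
  ⟨fun n m h => (hξ.succ_ne_whiteTile_and_add_two_mem hT n m h).2,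
    fun n m h => hξ.2.2.1 (n + 2) m (by omega), fun n m h => hξ.2.2.2 (n + 2) m (by omega)⟩

end Backward

/-- A tiling system D without white-bordered tiles almost covers the octant iff
the augmented white-bordered system D' covers the octant. -/
theorem almost_covers_iff_augmented_covers {Col : Type} (T : Set (Tile Col))
    (white : Col)
    (hT : ∀ t ∈ T, t.left ≠ white ∧ t.down ≠ white ∧ t.right ≠ white ∧ t.up ≠ white) :
    (∃ ξ : ℕ → ℕ → Tile Col, AlmostCoversOctant T ξ) ↔
    (∃ ξ : ℕ → ℕ → Tile Col, CoversOctant (augment T white) white ξ) :=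
  ⟨fun ⟨ξ, hξ⟩ => ⟨padOctant white ξ, coversOctant_padOctant (fun t ht => (hT t ht).2.1) hξ⟩,
    fun ⟨ξ, hξ⟩ => ⟨fun n m => ξ (n + 2) m,
      hξ.almostCoversOctant_add_two fun t ht => ⟨(hT t ht).2.2.1, (hT t ht).2.2.2⟩⟩⟩
end

section
/- Let D = (Col, T, white) be a white-bordered tiling system. If D covers the octant via ξ : 𝕆 → T, then there exists a proper T-hyperoctant representing ξ; conversely, the map represented by any proper T-hyperoctant covers the octant. -/
/-- Points (n, m, k) hosting the hyperoctant: the octant part is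
{ (n, m, k) : 0 ≤ n, m ≤ n, k ≤ N } and the incoming prefix is
{ (−i−1, 0, 0) : i ∈ ℤ_N }. -/
abbrev Pt : Type := ℤ × ℕ × ℕ

/-- The role r of a T-hyperoctant: edges (n, 0, 0) → (n+1, 0, 0) along the
bottom row, including the incoming prefix starting at (−N, 0, 0). -/
def rRel (N : ℕ) (p q : Pt) : Prop :=
  p.2.1 = 0 ∧ p.2.2 = 0 ∧ q.2.1 = 0 ∧ q.2.2 = 0 ∧
  q.1 = p.1 + 1 ∧ -(N : ℤ) ≤ p.1

/-- The role s of a T-hyperoctant: edges (n, m, 0) → (n, m+1, 0) for m < n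
inside the octant, and (n, m, k) → (n, m, k+1) for k < N on the outgoing
paths. -/
def sRel (N : ℕ) (p q : Pt) : Prop :=
  q.1 = p.1 ∧ 0 ≤ p.1 ∧
  ((p.2.2 = 0 ∧ q.2.2 = 0 ∧ q.2.1 = p.2.1 + 1 ∧ (q.2.1 : ℤ) ≤ p.1) ∨
   (q.2.1 = p.2.1 ∧ q.2.2 = p.2.2 + 1 ∧ (p.2.1 : ℤ) ≤ p.1 ∧ q.2.2 ≤ N))

/-- The concept In: the inner (octant) elements 𝕆 × {0}. -/
def InSet : Set Pt :=
  {p | 0 ≤ p.1 ∧ (p.2.1 : ℤ) ≤ p.1 ∧ p.2.2 = 0}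

/-- The concept Cur: (n, m, k) ∈ Cur iff (n, m, 0) is an octant position
carrying the tile t_k (where ξ gives the index of the tile carried at each
octant position). -/
def CurSet (N : ℕ) (ξ : ℕ → ℕ → Fin N) : Set Pt :=
  {p | 0 ≤ p.1 ∧ (p.2.1 : ℤ) ≤ p.1 ∧ (ξ p.1.toNat p.2.1 : ℕ) + 1 = p.2.2}

/-- The constraints on the concept Prev of a T-hyperoctant: Prev holds only at
octant-based points (n, m, k) with 1 ≤ k ≤ N such that t_k is H-compatible with
the tile carried at (n, m, 0), and for every octant position (n, m) there is
exactly one such k. -/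
def PrevOK {Col : Type} (N : ℕ) (tiles : Fin N → Tile Col)
    (ξ : ℕ → ℕ → Fin N) (Prev : Set Pt) : Prop :=
  (∀ p ∈ Prev, 0 ≤ p.1 ∧ (p.2.1 : ℤ) ≤ p.1 ∧
    ∃ j : Fin N, p.2.2 = (j : ℕ) + 1 ∧
      HCompat (tiles j) (tiles (ξ p.1.toNat p.2.1))) ∧
  (∀ n m : ℕ, m ≤ n → ∃! k : ℕ, ((n : ℤ), m, k) ∈ Prev)

/-- The T-octant conditions (OInit) and (OVerti) on the tile assignment. -/
def OctBase {Col : Type} (white : Col) (N : ℕ) (tiles : Fin N → Tile Col)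
    (ξ : ℕ → ℕ → Fin N) : Prop :=
  tiles (ξ 0 0) = whiteTile white ∧ tiles (ξ 1 0) ≠ whiteTile white ∧
  ∀ n m : ℕ, m + 1 ≤ n → VCompat (tiles (ξ n m)) (tiles (ξ n (m + 1)))

/-- Properness of a hyperoctant: Cur at (n, m, k) implies Prev at (n+1, m, k). -/
def Proper (N : ℕ) (ξ : ℕ → ℕ → Fin N) (Prev : Set Pt) : Prop :=
  ∀ p ∈ CurSet N ξ, ((p.1 + 1, p.2.1, p.2.2) : Pt) ∈ Prev

/-- The query atom L(x, y) for L = { r^n s^n : n ∈ ℕ }: a path of n r-edges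
followed by n s-edges, for some n. -/
def EqReach {α : Type} (r s : α → α → Prop) (d e : α) : Prop :=
  ∃ (n : ℕ) (c : α), ReachN r n d c ∧ ReachN s n c e

/-- The condition (OHori) for the octant. -/
def OHori {Col : Type} (N : ℕ) (tiles : Fin N → Tile Col)
    (ξ : ℕ → ℕ → Fin N) : Prop :=
  ∀ n m : ℕ, m ≤ n → HCompat (tiles (ξ n m)) (tiles (ξ (n + 1) m))

section Octant

variable {Col : Type} {white : Col} {N : ℕ} {tiles : Fin N → Tile Col} {ξ : ℕ → ℕ → Fin N}

theorem diag_eq_whiteTile (hW : WhiteBordered (Set.range tiles) white)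
    (hBase : OctBase white N tiles ξ) (hHori : OHori N tiles ξ) (n : ℕ) :
    tiles (ξ n n) = whiteTile white := by
  induction n with
  | zero => exact hBase.1
  | succ n ih =>
    have hleft : (tiles (ξ (n + 1) n)).left = white := by
      have h := hHori n n le_rfl
      rw [HCompat, ih] at h
      exact h.symm
    have hup := hW.up_eq_of_left_eq ⟨_, rfl⟩ hleft
    have hdown : (tiles (ξ (n + 1) (n + 1))).down = white := by
      have h := hBase.2.2 (n + 1) n le_rfl
      rw [VCompat, hup] at h
      exact h.symm
    exact hW.eq_whiteTile_of_down_eq ⟨_, rfl⟩ hdown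

theorem mem_curSet_natCast {n m k : ℕ} :
    ((n, m, k) : Pt) ∈ CurSet N ξ ↔ m ≤ n ∧ (ξ n m : ℕ) + 1 = k := by
  simp [CurSet]

theorem prevOK_curSet {π : ℕ → ℕ → Fin N}
    (hπ : ∀ n m : ℕ, m ≤ n → HCompat (tiles (π n m)) (tiles (ξ n m))) :
    PrevOK N tiles ξ (CurSet N π) := by
  refine ⟨fun p ⟨hn, hm, hk⟩ => ⟨hn, hm, π p.1.toNat p.2.1, hk.symm, hπ _ _ (by omega)⟩, ?_⟩
  intro n m hmn
  refine ⟨(π n m : ℕ) + 1, mem_curSet_natCast.2 ⟨hmn, rfl⟩, fun k hk => ?_⟩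
  exact (mem_curSet_natCast.1 hk).2.symm

theorem proper_curSet {π : ℕ → ℕ → Fin N} (hπ : ∀ n m : ℕ, m ≤ n → π (n + 1) m = ξ n m) :
    Proper N ξ (CurSet N π) := by
  rintro ⟨n, m, k⟩ ⟨hn, hm, hk⟩
  simp only at hn hm hk
  show 0 ≤ n + 1 ∧ (m : ℤ) ≤ n + 1 ∧ (π (n + 1).toNat m : ℕ) + 1 = k
  refine ⟨by omega, by omega, ?_⟩
  rw [show (n + 1).toNat = n.toNat + 1 by omega, hπ _ _ (by omega), hk]

theorem oHori_of_proper {Prev : Set Pt} (hPrev : PrevOK N tiles ξ Prev)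
    (hProper : Proper N ξ Prev) : OHori N tiles ξ := by
  intro n m hmn
  have hcur := hProper _ (mem_curSet_natCast.2 ⟨hmn, rfl⟩)
  obtain ⟨-, -, j, hj, hcompat⟩ := hPrev.1 _ hcur
  have hjξ : j = ξ n m := Fin.ext (by simp only at hj; omega)
  simpa [hjξ, show ((n : ℤ) + 1).toNat = n + 1 by omega] using hcompat

end Octant

theorem covering_iff_proper_hyperoctant_general {Col : Type} (white : Col)
    (N : ℕ) (tiles : Fin N → Tile Col)
    (hW : WhiteBordered (Set.range tiles) white)
    (ξ : ℕ → ℕ → Fin N) :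
    ((OctBase white N tiles ξ ∧ OHori N tiles ξ) →
      ∃ Prev : Set Pt, PrevOK N tiles ξ Prev ∧ Proper N ξ Prev) ∧
    (∀ Prev : Set Pt, OctBase white N tiles ξ → PrevOK N tiles ξ Prev →
      Proper N ξ Prev → OHori N tiles ξ) := by
  refine ⟨fun ⟨hBase, hHori⟩ => ?_, fun _ _ hPrev hProper => oHori_of_proper hPrev hProper⟩
  obtain ⟨j₀, hj₀⟩ := hW.1
  let π : ℕ → ℕ → Fin N := fun n m => if m < n then ξ (n - 1) m else j₀
  refine ⟨CurSet N π, prevOK_curSet fun n m hmn => ?_, proper_curSet fun n m hmn => ?_⟩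
  · by_cases hlt : m < n
    · obtain ⟨n, rfl⟩ : ∃ n', n = n' + 1 := ⟨n - 1, by omega⟩
      simpa [π, hlt] using hHori n m (by omega)
    · obtain rfl : m = n := by omega
      simp only [π, hlt, if_false, hj₀, diag_eq_whiteTile hW hBase hHori]
      rfl
  · simp [π, Nat.lt_succ_of_le hmn]

/-- If a white-bordered tiling system covers the octant via ξ, then there is a
proper T-hyperoctant representing ξ (i.e., a choice of Prev satisfying the
hyperoctant constraints that makes the hyperoctant proper); conversely, the
tile map represented by any proper T-hyperoctant covers the octant. -/
theorem covering_iff_proper_hyperoctant {Col : Type} (white : Col)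
    (N : ℕ) (hN : 0 < N) (tiles : Fin N → Tile Col)
    (hW : WhiteBordered (Set.range tiles) white)
    (ξ : ℕ → ℕ → Fin N) :
    ((OctBase white N tiles ξ ∧ OHori N tiles ξ) →
      ∃ Prev : Set Pt, PrevOK N tiles ξ Prev ∧ Proper N ξ Prev) ∧
    (∀ Prev : Set Pt, OctBase white N tiles ξ → PrevOK N tiles ξ Prev →
      Proper N ξ Prev → OHori N tiles ξ) :=
  covering_iff_proper_hyperoctant_general white N tiles hW ξ
end
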